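/- Define h₀(x) = v''(x)·v'(x)^{-3/2}. Then ∫_ℝ h₀(x) w(x)² dx = 0, ∫_ℝ h₀(x)² w(x)² dx = k²/3, and ∫_ℝ (h₀'(x))² w(x)² dx = k⁴/4; in particular ∫_ℝ h₀² w² dx = (4/(3k²)) ∫_ℝ (h₀')² w² dx, so h₀ realizes equality in the Poincaré inequality with constant 4/(3k²). -/

import Mathlib

open Real MeasureTheory

/-- The wave number `k = sqrt(b/(2ν))`. -/
noncomputable def waveK (ν b : ℝ) : ℝ := Real.sqrt (b / (2 * ν))

/-- The travelling wave profile `v(x) = (1 + exp(-k x))⁻¹`. -/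
noncomputable def twProfile (ν b : ℝ) (x : ℝ) : ℝ :=
  (1 + Real.exp (-(waveK ν b) * x))⁻¹

/-- `w = v' = k v (1 - v)`. -/
noncomputable def twW (ν b : ℝ) (x : ℝ) : ℝ :=
  waveK ν b * twProfile ν b x * (1 - twProfile ν b x)

/-- The extremal function `h₀ = v''·(v')^{-3/2}` of the Poincaré inequality. -/
noncomputable def extremalH (ν b : ℝ) (x : ℝ) : ℝ :=
  deriv (deriv (twProfile ν b)) x * (deriv (twProfile ν b) x) ^ (-(3 / 2) : ℝ)

/-! In the variable `t = k x / 2` everything is hyperbolic: `v = (1 + tanh t) / 2`, hence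
`w = v' = (k/4) sech² t`, `v'' = -(k²/4) sinh t / cosh³ t`, and so `h₀ = -2 √k sinh t` and
`h₀' = -k √k cosh t`. Then `h₀ w²` is odd, `h₀² w² = (k³/4) tanh² t sech² t` and
`(h₀')² w² = (k⁵/16) sech² t`, which integrate (`dx = (2/k) dt`) through the antiderivatives
`tanh³ t / 3` and `tanh t`. -/

open Filter Topology

namespace Real

theorem one_sub_tanh_sq (x : ℝ) : 1 - tanh x ^ 2 = (cosh x ^ 2)⁻¹ := by
  have := (cosh_pos x).ne'
  rw [tanh_eq_sinh_div_cosh]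
  field_simp
  linarith [cosh_sq x]

theorem hasDerivAt_tanh (x : ℝ) : HasDerivAt tanh (cosh x ^ 2)⁻¹ x := by
  have h := (hasDerivAt_sinh x).div (hasDerivAt_cosh x) (cosh_pos x).ne'
  rw [show sinh / cosh = tanh from funext fun y => (tanh_eq_sinh_div_cosh y).symm] at h
  refine h.congr_deriv ?_
  rw [← sq, ← sq, cosh_sq, add_sub_cancel_left, one_div]

@[fun_prop]
theorem continuous_tanh : Continuous tanh :=
  continuous_iff_continuousAt.mpr fun x => (hasDerivAt_tanh x).continuousAt

theorem tanh_eq_one_sub_two_div (x : ℝ) : tanh x = 1 - 2 / (exp (2 * x) + 1) := by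
  have h1 : exp (2 * x) = exp x * exp x := by rw [← exp_add]; ring_nf
  have := (exp_pos x).ne'
  rw [tanh_eq, h1, exp_neg]
  field_simp
  ring

theorem tendsto_tanh_atTop : Tendsto tanh atTop (𝓝 1) := by
  have h : Tendsto (fun x => 2 / (exp (2 * x) + 1)) atTop (𝓝 0) :=
    (tendsto_atTop_add_const_right _ 1
      (tendsto_exp_atTop.comp (tendsto_id.const_mul_atTop two_pos))).const_div_atTop 2
  simpa [← tanh_eq_one_sub_two_div] using h.const_sub 1

theorem tendsto_tanh_atBot : Tendsto tanh atBot (𝓝 (-1)) := by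
  have h : Tendsto (fun x => 2 / (exp (2 * x) + 1)) atBot (𝓝 (2 / (0 + 1))) :=
    tendsto_const_nhds.div
      ((tendsto_exp_atBot.comp (tendsto_id.const_mul_atBot two_pos)).add_const 1) (by norm_num)
  convert h.const_sub 1 using 1
  · exact funext tanh_eq_one_sub_two_div
  · norm_num

-- `cosh² x = 1 + sinh² x ≥ 1 + x²`
theorem integrable_inv_cosh_sq : Integrable fun x => (cosh x ^ 2)⁻¹ := by
  refine integrable_inv_one_add_sq.mono' (by fun_prop) (Eventually.of_forall fun x => ?_)
  have hx : |x| ≤ |sinh x| := by rw [abs_sinh]; exact self_le_sinh_iff.mpr (abs_nonneg x)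
  rw [norm_inv, norm_pow, norm_eq_abs, abs_of_pos (cosh_pos x), cosh_sq']
  exact inv_anti₀ (by positivity) (add_le_add_right (sq_le_sq.mpr hx) 1)

theorem integral_inv_cosh_sq : ∫ x, (cosh x ^ 2)⁻¹ = 2 := by
  rw [integral_of_hasDerivAt_of_tendsto hasDerivAt_tanh integrable_inv_cosh_sq
    tendsto_tanh_atBot tendsto_tanh_atTop]
  norm_num

theorem integral_tanh_sq_mul_inv_cosh_sq : ∫ x, tanh x ^ 2 * (cosh x ^ 2)⁻¹ = 2 / 3 := by
  have hderiv (x : ℝ) : HasDerivAt (fun y => tanh y ^ 3 / 3) (tanh x ^ 2 * (cosh x ^ 2)⁻¹) x := by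
    refine (((hasDerivAt_tanh x).pow 3).div_const 3).congr_deriv ?_
    ring
  have hint : Integrable fun x => tanh x ^ 2 * (cosh x ^ 2)⁻¹ := by
    refine integrable_inv_cosh_sq.mono' (by fun_prop) (Eventually.of_forall fun x => ?_)
    rw [norm_mul, norm_pow, norm_eq_abs, sq_abs, norm_of_nonneg (by positivity)]
    exact mul_le_of_le_one_left (by positivity) (tanh_sq_lt_one x).le
  rw [integral_of_hasDerivAt_of_tendsto hderiv hint
    ((tendsto_tanh_atBot.pow 3).div_const 3) ((tendsto_tanh_atTop.pow 3).div_const 3)]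
  norm_num

end Real

theorem integral_eq_zero_of_odd {G E : Type*} [MeasurableSpace G] [AddGroup G]
    [MeasurableNeg G] [NormedAddCommGroup E] [NormedSpace ℝ E] {μ : Measure G}
    [μ.IsNegInvariant] {f : G → E} (hf : Function.Odd f) : ∫ x, f x ∂μ = 0 := by
  have h := integral_neg_eq_self f μ
  simp only [hf _, integral_neg] at h
  have h2 : (2 : ℝ) • ∫ x, f x ∂μ = 0 := by
    rw [two_smul]
    nth_rw 1 [← h]
    exact neg_add_cancel _
  exact (smul_eq_zero.mp h2).resolve_left two_ne_zero

theorem integral_comp_mul_left_of_pos (g : ℝ → ℝ) {c : ℝ} (hc : 0 < c) :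
    ∫ x, g (c * x) = c⁻¹ * ∫ x, g x := by
  rw [Measure.integral_comp_mul_left, abs_of_pos (inv_pos.mpr hc), smul_eq_mul]

theorem HasDerivAt.tanh {f : ℝ → ℝ} {f' x : ℝ} (hf : HasDerivAt f f' x) :
    HasDerivAt (fun y => Real.tanh (f y)) ((Real.cosh (f x) ^ 2)⁻¹ * f') x :=
  (hasDerivAt_tanh (f x)).comp x hf

theorem inv_one_add_exp_neg_mul (k x : ℝ) :
    (1 + exp (-k * x))⁻¹ = (1 + tanh (k / 2 * x)) / 2 := by
  rw [tanh_eq_one_sub_two_div, show 2 * (k / 2 * x) = -(-k * x) by ring, exp_neg]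
  have := (exp_pos (-k * x)).ne'
  field_simp
  ring

section TravellingWave

variable (ν b : ℝ)

theorem twProfile_eq : twProfile ν b = fun x => (1 + tanh (waveK ν b / 2 * x)) / 2 :=
  funext fun x => inv_one_add_exp_neg_mul (waveK ν b) x

theorem twW_eq : twW ν b = fun x => waveK ν b / 4 * (cosh (waveK ν b / 2 * x) ^ 2)⁻¹ := by
  ext x
  rw [twW, twProfile_eq, ← one_sub_tanh_sq]
  ring

theorem hasDerivAt_twProfile (x : ℝ) : HasDerivAt (twProfile ν b) (twW ν b x) x := by
  rw [twProfile_eq, twW_eq]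
  refine ((((hasDerivAt_id' x).const_mul _).tanh.const_add 1).div_const 2).congr_deriv ?_
  ring

theorem deriv_twProfile : deriv (twProfile ν b) = twW ν b :=
  funext fun x => (hasDerivAt_twProfile ν b x).deriv

theorem hasDerivAt_twW (x : ℝ) :
    HasDerivAt (twW ν b)
      (-(waveK ν b ^ 2 / 4) * sinh (waveK ν b / 2 * x) / cosh (waveK ν b / 2 * x) ^ 3) x := by
  rw [twW_eq]
  have hc := (cosh_pos (waveK ν b / 2 * x)).ne'
  refine ((((hasDerivAt_id' x).const_mul _).cosh.fun_pow 2).fun_inv (pow_ne_zero 2 hc)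
    |>.const_mul (waveK ν b / 4)).congr_deriv ?_
  field_simp
  ring

variable {ν b}

theorem extremalH_eq (hk : 0 < waveK ν b) :
    extremalH ν b = fun x => -2 * √(waveK ν b) * sinh (waveK ν b / 2 * x) := by
  ext x
  rw [extremalH, deriv_twProfile, (hasDerivAt_twW ν b x).deriv, twW_eq]
  beta_reduce
  set k := waveK ν b
  set c := cosh (k / 2 * x)
  have hc : 0 < c := cosh_pos _
  have hw : k / 4 * (c ^ 2)⁻¹ = (√k / (2 * c)) ^ 2 := by
    rw [div_pow, sq_sqrt hk.le]
    ring
  have hrpow : ((√k / (2 * c)) ^ 2) ^ (-(3 / 2) : ℝ) = ((√k / (2 * c)) ^ 3)⁻¹ := by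
    rw [← rpow_natCast, ← rpow_mul (by positivity), ← rpow_natCast, ← rpow_neg (by positivity)]
    norm_num
  rw [hw, hrpow]
  field_simp
  rw [show k ^ 2 = √k ^ 4 by rw [show 4 = 2 * 2 by rfl, pow_mul, sq_sqrt hk.le]]
  ring

theorem hasDerivAt_extremalH (hk : 0 < waveK ν b) (x : ℝ) :
    HasDerivAt (extremalH ν b)
      (-(waveK ν b * √(waveK ν b)) * cosh (waveK ν b / 2 * x)) x := by
  rw [extremalH_eq hk]
  refine (((hasDerivAt_id' x).const_mul _).sinh.const_mul _).congr_deriv ?_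
  ring

theorem waveK_pos (hν : 0 < ν) (hb : 0 < b) : 0 < waveK ν b :=
  sqrt_pos.mpr (by positivity)

theorem integral_extremalH_mul_twW_sq (hk : 0 < waveK ν b) :
    ∫ x, extremalH ν b x * twW ν b x ^ 2 = 0 := by
  rw [extremalH_eq hk, twW_eq]
  exact integral_eq_zero_of_odd fun x => by simp only [mul_neg, sinh_neg, cosh_neg]; ring

theorem integral_extremalH_sq_mul_twW_sq (hk : 0 < waveK ν b) :
    ∫ x, extremalH ν b x ^ 2 * twW ν b x ^ 2 = waveK ν b ^ 2 / 3 := by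
  rw [extremalH_eq hk, twW_eq]
  set k := waveK ν b
  calc _ = ∫ x, k ^ 3 / 4 * (tanh (k / 2 * x) ^ 2 * (cosh (k / 2 * x) ^ 2)⁻¹) := by
        congr 1; ext x
        have := (cosh_pos (k / 2 * x)).ne'
        rw [tanh_eq_sinh_div_cosh, mul_pow, mul_pow, sq_sqrt hk.le]
        field_simp
        ring
    _ = k ^ 2 / 3 := by
        rw [integral_const_mul,
          integral_comp_mul_left_of_pos (fun y => tanh y ^ 2 * (cosh y ^ 2)⁻¹) (by positivity),
          integral_tanh_sq_mul_inv_cosh_sq]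
        field_simp
        ring

theorem integral_deriv_extremalH_sq_mul_twW_sq (hk : 0 < waveK ν b) :
    ∫ x, deriv (extremalH ν b) x ^ 2 * twW ν b x ^ 2 = waveK ν b ^ 4 / 4 := by
  simp only [(hasDerivAt_extremalH hk _).deriv, twW_eq]
  set k := waveK ν b
  calc _ = ∫ x, k ^ 5 / 16 * (cosh (k / 2 * x) ^ 2)⁻¹ := by
        congr 1; ext x
        have := (cosh_pos (k / 2 * x)).ne'
        rw [mul_pow, neg_sq, mul_pow, sq_sqrt hk.le]
        field_simp
        ring
    _ = k ^ 4 / 4 := by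
        rw [integral_const_mul,
          integral_comp_mul_left_of_pos (fun y => (cosh y ^ 2)⁻¹) (by positivity),
          integral_inv_cosh_sq]
        field_simp
        ring

end TravellingWave

theorem extremal_function_poincare_general
    (ν b : ℝ) (hν : 0 < ν) (hb : 0 < b) :
    (∫ x : ℝ, extremalH ν b x * (twW ν b x) ^ 2) = 0 ∧
    (∫ x : ℝ, (extremalH ν b x) ^ 2 * (twW ν b x) ^ 2) = waveK ν b ^ 2 / 3 ∧
    (∫ x : ℝ, (deriv (extremalH ν b) x) ^ 2 * (twW ν b x) ^ 2) = waveK ν b ^ 4 / 4 ∧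
    (∫ x : ℝ, (extremalH ν b x) ^ 2 * (twW ν b x) ^ 2)
      = (4 / (3 * waveK ν b ^ 2))
        * ∫ x : ℝ, (deriv (extremalH ν b) x) ^ 2 * (twW ν b x) ^ 2 := by
  have hk := waveK_pos hν hb
  have hsq := integral_extremalH_sq_mul_twW_sq hk
  have hderiv_sq := integral_deriv_extremalH_sq_mul_twW_sq hk
  refine ⟨integral_extremalH_mul_twW_sq hk, hsq, hderiv_sq, ?_⟩
  rw [hsq, hderiv_sq]
  field_simp

/-- `h₀ = v''·(v')^{-3/2}` satisfies `∫ h₀ w² = 0`,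
`∫ h₀² w² = k²/3`, `∫ (h₀')² w² = k⁴/4`, and thus realizes equality in the
Poincaré inequality with constant `4/(3k²)`. -/
theorem extremal_function_poincare
    (ν b a : ℝ) (hν : 0 < ν) (hb : 0 < b) (ha : a ∈ Set.Ioo (0 : ℝ) 1) :
    (∫ x : ℝ, extremalH ν b x * (twW ν b x) ^ 2) = 0 ∧
    (∫ x : ℝ, (extremalH ν b x) ^ 2 * (twW ν b x) ^ 2) = waveK ν b ^ 2 / 3 ∧
    (∫ x : ℝ, (deriv (extremalH ν b) x) ^ 2 * (twW ν b x) ^ 2) = waveK ν b ^ 4 / 4 ∧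
    (∫ x : ℝ, (extremalH ν b x) ^ 2 * (twW ν b x) ^ 2)
      = (4 / (3 * waveK ν b ^ 2))
        * ∫ x : ℝ, (deriv (extremalH ν b) x) ^ 2 * (twW ν b x) ^ 2 :=
  extremal_function_poincare_general ν b hν hb
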